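/- Let G be a finite connected simple graph with at least two vertices such that meg(G) = |V(G)|, and let H be any finite connected simple graph with at least two vertices. Then meg(G □ H) = |V(G)|·|V(H)| and meg(G ⊠ H) = |V(G)|·|V(H)|; that is, the only MEG-set of either product is the whole vertex set. -/

import Mathlib

open SimpleGraph

/-- `S` is a monitoring edge-geodetic set (MEG-set) of `G`: for every edge `e` of `G`
there are `x, y ∈ S` whose distance in `G − e` differs from their distance in `G`
(including the case that they become disconnected in `G − e`). -/
def IsMEGSet {V : Type*} (G : SimpleGraph V) (S : Set V) : Prop :=
  ∀ e ∈ G.edgeSet, ∃ x ∈ S, ∃ y ∈ S,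
    ¬ (G.deleteEdges {e}).Reachable x y ∨ (G.deleteEdges {e}).dist x y ≠ G.dist x y

/-- The monitoring edge-geodetic number: the minimum cardinality of an MEG-set. -/
noncomputable def meg {V : Type*} [Fintype V] (G : SimpleGraph V) : ℕ :=
  sInf {n | ∃ S : Set V, IsMEGSet G S ∧ S.ncard = n}

/-- The strong product `G ⊠ H` of two simple graphs: `(a,b)` adjacent to `(c,d)` iff
`a = c` and `bd ∈ E(H)`, or `b = d` and `ac ∈ E(G)`, or `ac ∈ E(G)` and `bd ∈ E(H)`. -/
def strongProd {α β : Type*} (G : SimpleGraph α) (H : SimpleGraph β) :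
    SimpleGraph (α × β) where
  Adj x y := (x.1 = y.1 ∧ H.Adj x.2 y.2) ∨ (x.2 = y.2 ∧ G.Adj x.1 y.1) ∨
    (G.Adj x.1 y.1 ∧ H.Adj x.2 y.2)
  symm := ⟨fun x y => by
    rintro (⟨h1, h2⟩ | ⟨h1, h2⟩ | ⟨h1, h2⟩)
    · exact Or.inl ⟨h1.symm, h2.symm⟩
    · exact Or.inr (Or.inl ⟨h1.symm, h2.symm⟩)
    · exact Or.inr (Or.inr ⟨h1.symm, h2.symm⟩)⟩
  loopless := ⟨fun x => by
    rintro (⟨_, h⟩ | ⟨_, h⟩ | ⟨h, _⟩)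
    · exact H.irrefl h
    · exact G.irrefl h
    · exact G.irrefl h⟩

infixl:70 " ⊠ " => strongProd

/-! If `meg G = |V(G)|`, then for every vertex `v` the set `V(G) ∖ {v}` is not an MEG-set: some
edge `ab` of `G` has, between any two vertices other than `v`, a geodesic avoiding it. In either
product the edge `(a,w)(b,w)` then has the same property with respect to `(v,w)`, so no MEG-set
of the product misses `(v,w)`. Pairs inside the layer `G × {w}` use the layer copy of such a
geodesic; a pair with an endpoint outside that layer has a geodesic whose `G`-steps all lie in the
layer of that endpoint: in `G □ H` walk along `G` first and then along `H`, in `G ⊠ H` move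
diagonally first. -/

namespace SimpleGraph

variable {V W : Type*} {G : SimpleGraph V} {H : SimpleGraph W}

def Monitors (G : SimpleGraph V) (x y : V) (e : Sym2 V) : Prop :=
  ¬ (G.deleteEdges {e}).Reachable x y ∨ (G.deleteEdges {e}).dist x y ≠ G.dist x y

lemma not_monitors_iff {x y : V} {e : Sym2 V} :
    ¬ G.Monitors x y e ↔ ∃ p : G.Walk x y, p.length = G.dist x y ∧ e ∉ p.edges := by
  simp only [Monitors, not_or, not_not]
  constructor
  · rintro ⟨hr, hd⟩
    obtain ⟨p, hp⟩ := hr.exists_walk_length_eq_dist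
    refine ⟨p.mapLe (G.deleteEdges_le _), by rw [Walk.length_mapLe, hp, hd], fun he => ?_⟩
    rw [Walk.edges_mapLe_eq_edges] at he
    simpa using p.edges_subset_edgeSet he
  · rintro ⟨p, hp, he⟩
    let p' := p.toDeleteEdge e he
    have hp' : p'.length = G.dist x y := (Walk.length_transfer _ _).trans hp
    exact ⟨⟨p'⟩, le_antisymm (hp' ▸ dist_le p') (Reachable.dist_anti (G.deleteEdges_le _) ⟨p'⟩)⟩

lemma Monitors.symm {x y : V} {e : Sym2 V} (h : G.Monitors x y e) : G.Monitors y x e := by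
  rwa [Monitors, reachable_comm, dist_comm, G.dist_comm]

end SimpleGraph

section MEG

variable {V W : Type*} {G : SimpleGraph V}

lemma IsMEGSet.mono {S T : Set V} (hS : IsMEGSet G S) (hST : S ⊆ T) : IsMEGSet G T := by
  intro e he
  obtain ⟨x, hx, y, hy, h⟩ := hS e he
  exact ⟨x, hST hx, y, hST hy, h⟩

lemma isMEGSet_univ (G : SimpleGraph V) : IsMEGSet G Set.univ := by
  intro e he
  induction e using Sym2.ind with
  | _ a b =>
    refine ⟨a, trivial, b, trivial, Or.inr ?_⟩
    rw [dist_eq_one_iff_adj.mpr he, Ne, dist_eq_one_iff_adj, deleteEdges_adj]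
    exact fun h => h.2 rfl

lemma not_isMEGSet_compl_singleton_iff {z : V} :
    ¬ IsMEGSet G {z}ᶜ ↔ ∃ e ∈ G.edgeSet, ∀ x ≠ z, ∀ y ≠ z, ¬ G.Monitors x y e := by
  simp [IsMEGSet, Monitors]

lemma forall_isMEGSet_eq_univ_iff :
    (∀ S, IsMEGSet G S → S = Set.univ) ↔ ∀ z, ¬ IsMEGSet G {z}ᶜ := by
  refine ⟨fun h z hz => ?_, fun h S hS => ?_⟩
  · simpa using congr_arg (z ∈ ·) (h _ hz)
  · by_contra hne
    obtain ⟨z, hz⟩ := (Set.ne_univ_iff_exists_notMem S).mp hne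
    exact h z (hS.mono (Set.subset_compl_singleton_iff.mpr hz))

lemma meg_eq_card_iff [Fintype V] :
    meg G = Fintype.card V ↔ ∀ S, IsMEGSet G S → S = Set.univ := by
  have huniv : (Set.univ : Set V).ncard = Fintype.card V := by
    rw [Set.ncard_univ, Nat.card_eq_fintype_card]
  constructor
  · intro h S hS
    by_contra hne
    have : meg G ≤ S.ncard := Nat.sInf_le ⟨S, hS, rfl⟩
    have := Set.ncard_lt_ncard (Set.ssubset_univ_iff.mpr hne)
    omega
  · intro h
    refine le_antisymm (Nat.sInf_le ⟨_, isMEGSet_univ G, huniv⟩) (le_csInf ?_ ?_)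
    · exact ⟨_, _, isMEGSet_univ G, huniv⟩
    · rintro n ⟨S, hS, rfl⟩
      rw [h S hS, huniv]

lemma not_isMEGSet_compl_singleton_of_layer {P : SimpleGraph (V × W)} {v : V} {w : W}
    (hG : ¬ IsMEGSet G {v}ᶜ) (hedge : ∀ e ∈ G.edgeSet, e.map (·, w) ∈ P.edgeSet)
    (hlayer : ∀ {x y e}, ¬ G.Monitors x y e → ¬ P.Monitors (x, w) (y, w) (e.map (·, w)))
    (hoff : ∀ e ∈ G.edgeSet, ∀ {p q : V × W}, p.2 ≠ w → ¬ P.Monitors p q (e.map (·, w))) :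
    ¬ IsMEGSet P {(v, w)}ᶜ := by
  rw [not_isMEGSet_compl_singleton_iff] at hG ⊢
  obtain ⟨e, he, hv⟩ := hG
  refine ⟨e.map (·, w), hedge e he, ?_⟩
  rintro ⟨x, u⟩ hp ⟨y, u'⟩ hq
  by_cases hu : u = w
  · by_cases hu' : u' = w
    · subst hu hu'
      exact hlayer (hv x (by simpa using hp) y (by simpa using hq))
    · exact fun h => hoff e he hu' h.symm
  · exact hoff e he hu

end MEG

namespace SimpleGraph

variable {V W : Type*} {G : SimpleGraph V} {H : SimpleGraph W}

lemma Walk.edges_boxProdLeft {x y : V} (c : W) (p : G.Walk x y) :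
    (p.boxProdLeft H c).edges = p.edges.map (Sym2.map (·, c)) :=
  Walk.edges_map _ p

lemma Walk.edges_boxProdRight {u u' : W} (x : V) (q : H.Walk u u') :
    (q.boxProdRight G x).edges = q.edges.map (Sym2.map (x, ·)) :=
  Walk.edges_map _ q

lemma Walk.length_boxProdLeft {x y : V} (c : W) (p : G.Walk x y) :
    (p.boxProdLeft H c).length = p.length :=
  Walk.length_map _ p

lemma Walk.length_boxProdRight {u u' : W} (x : V) (q : H.Walk u u') :
    (q.boxProdRight G x).length = q.length :=
  Walk.length_map _ q

lemma Walk.map_mem_edges_boxProdLeft {x y : V} {c w : W} {e : Sym2 V} (p : G.Walk x y) :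
    e.map (·, w) ∈ (p.boxProdLeft H c).edges ↔ c = w ∧ e ∈ p.edges := by
  rw [Walk.edges_boxProdLeft, List.mem_map]
  constructor
  · rintro ⟨e', he', h⟩
    induction e using Sym2.ind
    induction e' using Sym2.ind
    simp only [Sym2.map_mk, Sym2.eq_iff, Prod.mk.injEq] at h
    rcases h with ⟨⟨rfl, rfl⟩, rfl, -⟩ | ⟨⟨rfl, rfl⟩, rfl, -⟩
    · exact ⟨rfl, he'⟩
    · exact ⟨rfl, Sym2.eq_swap ▸ he'⟩
  · rintro ⟨rfl, h⟩
    exact ⟨_, h, rfl⟩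

lemma Walk.isDiag_of_map_mem_edges_boxProdRight {u u' w : W} {e : Sym2 V} (x : V)
    (q : H.Walk u u') (h : e.map (·, w) ∈ (q.boxProdRight G x).edges) : e.IsDiag := by
  rw [Walk.edges_boxProdRight, List.mem_map] at h
  obtain ⟨e', -, he'⟩ := h
  induction e using Sym2.ind
  induction e' using Sym2.ind
  simp only [Sym2.map_mk, Sym2.eq_iff, Prod.mk.injEq] at he'
  rcases he' with ⟨⟨rfl, -⟩, rfl, -⟩ | ⟨⟨rfl, -⟩, rfl, -⟩ <;> rfl

lemma dist_boxProd {x y : V} {u u' : W} (hG : G.Reachable x y) (hH : H.Reachable u u') :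
    (G □ H).dist (x, u) (y, u') = G.dist x y + H.dist u u' := by
  rw [dist, edist_boxProd, ENat.toNat_add (edist_ne_top_iff_reachable.mpr hG)
    (edist_ne_top_iff_reachable.mpr hH), dist, dist]

lemma not_monitors_boxProd_layer {x y : V} {e : Sym2 V} (w : W) (h : ¬ G.Monitors x y e) :
    ¬ (G □ H).Monitors (x, w) (y, w) (e.map (·, w)) := by
  obtain ⟨p, hp, he⟩ := not_monitors_iff.mp h
  refine not_monitors_iff.mpr ⟨p.boxProdLeft H w, ?_, ?_⟩
  · rw [dist_boxProd ⟨p⟩ .rfl, dist_self, add_zero, ← hp, Walk.length_boxProdLeft]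
  · rw [Walk.map_mem_edges_boxProdLeft]
    exact fun h => he h.2

lemma not_monitors_boxProd_of_snd_ne (hG : G.Connected) (hH : H.Connected) {e : Sym2 V}
    (he : ¬ e.IsDiag) {w : W} {p q : V × W} (hp : p.2 ≠ w) :
    ¬ (G □ H).Monitors p q (e.map (·, w)) := by
  obtain ⟨x, u⟩ := p
  obtain ⟨y, u'⟩ := q
  obtain ⟨pG, hpG⟩ := hG.exists_walk_length_eq_dist x y
  obtain ⟨pH, hpH⟩ := hH.exists_walk_length_eq_dist u u'
  refine not_monitors_iff.mpr ⟨(pG.boxProdLeft H u).append (pH.boxProdRight G y), ?_, ?_⟩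
  · rw [dist_boxProd (hG x y) (hH u u'), Walk.length_append, Walk.length_boxProdLeft,
      Walk.length_boxProdRight, hpG, hpH]
  · rw [Walk.edges_append, List.mem_append, Walk.map_mem_edges_boxProdLeft]
    rintro (h | h)
    · exact hp h.1
    · exact he (Walk.isDiag_of_map_mem_edges_boxProdRight y pH h)

lemma boxProd_le_strongProd : (G □ H) ≤ G ⊠ H := by
  rintro x y (⟨hG, hx⟩ | ⟨hH, hx⟩)
  · exact Or.inr (Or.inl ⟨hx, hG⟩)
  · exact Or.inl ⟨hx, hH⟩

lemma strongProd_adj_of_adj {x y : V} {u u' : W} (hG : G.Adj x y) (hH : H.Adj u u') :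
    (G ⊠ H).Adj (x, u) (y, u') :=
  Or.inr (Or.inr ⟨hG, hH⟩)

def Walk.strongProd : ∀ {x y : V} {u u' : W}, G.Walk x y → H.Walk u u' →
    (G ⊠ H).Walk (x, u) (y, u')
  | _, _, _, _, .nil, q => (q.boxProdRight G _).mapLe boxProd_le_strongProd
  | _, _, _, _, .cons h p, .nil => ((Walk.cons h p).boxProdLeft H _).mapLe boxProd_le_strongProd
  | _, _, _, _, .cons h p, .cons h' q => .cons (strongProd_adj_of_adj h h') (p.strongProd q)

lemma Walk.length_strongProd : ∀ {x y : V} {u u' : W} (p : G.Walk x y) (q : H.Walk u u'),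
    (p.strongProd q).length = max p.length q.length
  | _, _, _, _, .nil, q => by simp [strongProd, Walk.length_boxProdRight]
  | _, _, _, _, .cons h p, .nil => by simp [strongProd, Walk.length_boxProdLeft]
  | _, _, _, _, .cons h p, .cons h' q => by simp [strongProd, length_strongProd p q]

lemma Walk.eq_of_map_mem_edges_strongProd {e : Sym2 V} (he : ¬ e.IsDiag) {w : W} :
    ∀ {x y : V} {u u' : W} (p : G.Walk x y) (q : H.Walk u u'),
      e.map (·, w) ∈ (p.strongProd q).edges → u' = w
  | _, _, _, _, .nil, q, h => by
    rw [strongProd, edges_mapLe_eq_edges] at h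
    exact absurd (isDiag_of_map_mem_edges_boxProdRight _ q h) he
  | _, _, _, _, .cons _ _, .nil, h => by
    rw [strongProd, edges_mapLe_eq_edges, map_mem_edges_boxProdLeft] at h
    exact h.1
  | _, _, _, _, .cons hG p, .cons hH q, h => by
    rw [strongProd, edges_cons, List.mem_cons] at h
    rcases h with h | h
    · induction e using Sym2.ind
      simp only [Sym2.map_mk, Sym2.eq_iff, Prod.mk.injEq] at h
      rcases h with ⟨⟨-, rfl⟩, -, rfl⟩ | ⟨⟨-, rfl⟩, -, rfl⟩ <;> exact absurd hH (H.irrefl)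
    · exact eq_of_map_mem_edges_strongProd he p q h

lemma Walk.dist_apply_le_length {V' : Type*} {G' : SimpleGraph V'} (hG' : G'.Connected)
    {f : V → V'} (hf : ∀ {a b}, G.Adj a b → G'.dist (f a) (f b) ≤ 1) :
    ∀ {a b : V} (p : G.Walk a b), G'.dist (f a) (f b) ≤ p.length
  | _, _, .nil => by simp
  | a, b, .cons (v := c) h p => by
    have := dist_apply_le_length hG' hf p
    have := hf h
    have := hG'.dist_triangle (u := f a) (v := f c) (w := f b)
    rw [length_cons]
    omega

lemma dist_fst_le_one_of_strongProd_adj {p q : V × W} (h : (G ⊠ H).Adj p q) :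
    G.dist p.1 q.1 ≤ 1 := by
  rcases h with ⟨h, -⟩ | ⟨-, h⟩ | ⟨h, -⟩
  · simp [h]
  · exact (dist_eq_one_iff_adj.mpr h).le
  · exact (dist_eq_one_iff_adj.mpr h).le

lemma dist_snd_le_one_of_strongProd_adj {p q : V × W} (h : (G ⊠ H).Adj p q) :
    H.dist p.2 q.2 ≤ 1 := by
  rcases h with ⟨-, h⟩ | ⟨h, -⟩ | ⟨-, h⟩
  · exact (dist_eq_one_iff_adj.mpr h).le
  · simp [h]
  · exact (dist_eq_one_iff_adj.mpr h).le

lemma dist_strongProd (hG : G.Connected) (hH : H.Connected) (x y : V) (u u' : W) :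
    (G ⊠ H).dist (x, u) (y, u') = max (G.dist x y) (H.dist u u') := by
  obtain ⟨p, hp⟩ := hG.exists_walk_length_eq_dist x y
  obtain ⟨q, hq⟩ := hH.exists_walk_length_eq_dist u u'
  have hr : (G ⊠ H).Reachable (x, u) (y, u') := ⟨p.strongProd q⟩
  obtain ⟨r, hr⟩ := hr.exists_walk_length_eq_dist
  refine le_antisymm ?_ ?_
  · calc (G ⊠ H).dist (x, u) (y, u') ≤ (p.strongProd q).length := dist_le _
      _ = max (G.dist x y) (H.dist u u') := by rw [Walk.length_strongProd, hp, hq]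
  · rw [← hr]
    exact max_le (r.dist_apply_le_length hG dist_fst_le_one_of_strongProd_adj)
      (r.dist_apply_le_length hH dist_snd_le_one_of_strongProd_adj)

lemma not_monitors_strongProd_layer (hG : G.Connected) (hH : H.Connected) {x y : V}
    {e : Sym2 V} (w : W) (h : ¬ G.Monitors x y e) :
    ¬ (G ⊠ H).Monitors (x, w) (y, w) (e.map (·, w)) := by
  obtain ⟨p, hp, he⟩ := not_monitors_iff.mp h
  refine not_monitors_iff.mpr ⟨(p.boxProdLeft H w).mapLe boxProd_le_strongProd, ?_, ?_⟩
  · rw [dist_strongProd hG hH, dist_self, Nat.max_zero, ← hp, Walk.length_mapLe,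
      Walk.length_boxProdLeft]
  · rw [Walk.edges_mapLe_eq_edges, Walk.map_mem_edges_boxProdLeft]
    exact fun h => he h.2

lemma not_monitors_strongProd_of_snd_ne (hG : G.Connected) (hH : H.Connected) {e : Sym2 V}
    (he : ¬ e.IsDiag) {w : W} {p q : V × W} (hp : p.2 ≠ w) :
    ¬ (G ⊠ H).Monitors p q (e.map (·, w)) := by
  obtain ⟨x, u⟩ := p
  obtain ⟨y, u'⟩ := q
  obtain ⟨pG, hpG⟩ := hG.exists_walk_length_eq_dist y x
  obtain ⟨pH, hpH⟩ := hH.exists_walk_length_eq_dist u' u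
  refine not_monitors_iff.mpr ⟨(pG.strongProd pH).reverse, ?_, ?_⟩
  · rw [Walk.length_reverse, Walk.length_strongProd, hpG, hpH, dist_strongProd hG hH,
      G.dist_comm, H.dist_comm]
  · rw [Walk.edges_reverse, List.mem_reverse]
    exact fun h => hp (Walk.eq_of_map_mem_edges_strongProd he pG pH h)

end SimpleGraph

theorem meg_prod_of_meg_eq_card_general {V W : Type*} [Fintype V] [Fintype W]
    (G : SimpleGraph V) (H : SimpleGraph W)
    (hG : G.Connected) (hH : H.Connected)
    (hmeg : meg G = Fintype.card V) :
    meg (G □ H) = Fintype.card V * Fintype.card W ∧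
    meg (G ⊠ H) = Fintype.card V * Fintype.card W ∧
    (∀ S : Set (V × W), IsMEGSet (G □ H) S → S = Set.univ) ∧
    (∀ S : Set (V × W), IsMEGSet (G ⊠ H) S → S = Set.univ) := by
  have hGv := forall_isMEGSet_eq_univ_iff.mp (meg_eq_card_iff.mp hmeg)
  have hbox : ∀ S : Set (V × W), IsMEGSet (G □ H) S → S = Set.univ :=
    forall_isMEGSet_eq_univ_iff.mpr fun ⟨v, w⟩ => not_isMEGSet_compl_singleton_of_layer (hGv v)
      (fun _ he => (G.boxProdLeft H w).toHom.map_mem_edgeSet he)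
      (not_monitors_boxProd_layer w)
      (fun _ he _ _ => not_monitors_boxProd_of_snd_ne hG hH (G.not_isDiag_of_mem_edgeSet he))
  have hstrong : ∀ S : Set (V × W), IsMEGSet (G ⊠ H) S → S = Set.univ :=
    forall_isMEGSet_eq_univ_iff.mpr fun ⟨v, w⟩ => not_isMEGSet_compl_singleton_of_layer (hGv v)
      (fun _ he => edgeSet_mono boxProd_le_strongProd
        ((G.boxProdLeft H w).toHom.map_mem_edgeSet he))
      (not_monitors_strongProd_layer hG hH w)
      (fun _ he _ _ => not_monitors_strongProd_of_snd_ne hG hH (G.not_isDiag_of_mem_edgeSet he))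
  rw [← Fintype.card_prod]
  exact ⟨meg_eq_card_iff.mpr hbox, meg_eq_card_iff.mpr hstrong, hbox, hstrong⟩

theorem meg_prod_of_meg_eq_card {V W : Type*} [Fintype V] [Fintype W]
    (G : SimpleGraph V) (H : SimpleGraph W)
    (hG : G.Connected) (hH : H.Connected)
    (hV : 1 < Fintype.card V) (hW : 1 < Fintype.card W)
    (hmeg : meg G = Fintype.card V) :
    meg (G □ H) = Fintype.card V * Fintype.card W ∧
    meg (G ⊠ H) = Fintype.card V * Fintype.card W ∧
    (∀ S : Set (V × W), IsMEGSet (G □ H) S → S = Set.univ) ∧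
    (∀ S : Set (V × W), IsMEGSet (G ⊠ H) S → S = Set.univ) :=
  meg_prod_of_meg_eq_card_general G H hG hH hmeg
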